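/- Let ‖·‖ be a URTC-norm on ℝ², let d > 0, and let φ : ℝ² → ℝ² be a map that preserves distance d. Then for all b₀, b₂ ∈ ℝ² with ‖b₀ − b₂‖ = d, one has φ(2b₂ − b₀) = 2φ(b₂) − φ(b₀). -/

import Mathlib

/-- `N` is a norm on `ℝ²`. -/
structure IsNorm (N : ℝ × ℝ → ℝ) : Prop where
  add_le : ∀ x y : ℝ × ℝ, N (x + y) ≤ N x + N y
  smul_eq : ∀ (c : ℝ) (x : ℝ × ℝ), N (c • x) = |c| * N x
  eq_zero_of : ∀ x : ℝ × ℝ, N x = 0 → x = 0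

/-- `N` is a URTC-norm: for every `a b` at `N`-distance `1`, there are exactly two
points `x` with `N (a - x) = 1` and `N (b - x) = 1`. -/
def IsURTC (N : ℝ × ℝ → ℝ) : Prop :=
  ∀ a b : ℝ × ℝ, N (a - b) = 1 →
    {x : ℝ × ℝ | N (a - x) = 1 ∧ N (b - x) = 1}.encard = 2

/-! If `N (a - b) = d`, the common `d`-neighbours of `a` and `b` are some `x` and its reflection
`a + b - x`. A `d`-preserving map sends them to common `d`-neighbours of `φ a` and `φ b`, so
`φ (a + b - x)` is `φ x` or `φ a + φ b - φ x`. To exclude `φ (a + b - x) = φ x`, an intermediate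
value argument on the `N`-circle produces a second rhombus `x, x + α, x + α + β, x + β` whose far
vertex is at distance `d` from `a + b - x`; its image would have two common neighbours `φ x` and
`φ (x + α + β)` at distance `d`, which the URTC property forbids. Applying this rhombus rule to
`b₀, p, b₂` and then to `p, b₂, p + b₂ - b₀` gives the theorem. -/

open Set
open scoped Pointwise

namespace IsNorm

variable {N : ℝ × ℝ → ℝ}

def toSeminorm (hN : IsNorm N) : Seminorm ℝ (ℝ × ℝ) :=
  Seminorm.of N hN.add_le fun c x => by rw [hN.smul_eq, Real.norm_eq_abs]

lemma map_zero (hN : IsNorm N) : N 0 = 0 :=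
  _root_.map_zero hN.toSeminorm

lemma map_neg (hN : IsNorm N) (x : ℝ × ℝ) : N (-x) = N x :=
  map_neg_eq_map hN.toSeminorm x

lemma map_sub_rev (hN : IsNorm N) (x y : ℝ × ℝ) : N (x - y) = N (y - x) :=
  _root_.map_sub_rev hN.toSeminorm x y

lemma sub_le_map_sub (hN : IsNorm N) (x y : ℝ × ℝ) : N x - N y ≤ N (x - y) := by
  simpa using hN.add_le (x - y) y

lemma pos_of_ne_zero (hN : IsNorm N) {x : ℝ × ℝ} (hx : x ≠ 0) : 0 < N x :=
  (apply_nonneg hN.toSeminorm x).lt_of_ne' (mt (hN.eq_zero_of x) hx)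

lemma continuous (hN : IsNorm N) : Continuous N :=
  continuousOn_univ.mp (hN.toSeminorm.convexOn.continuousOn isOpen_univ)

lemma sphere_eq_image (hN : IsNorm N) {d : ℝ} (hd : 0 < d) :
    {z | N z = d} = (fun z => (d / N z) • z) '' Metric.sphere (0 : ℝ × ℝ) 1 := by
  ext w
  constructor
  · intro hw
    have hw0 : w ≠ 0 := by rintro rfl; exact hd.ne' (hw.symm.trans hN.map_zero)
    have hnw : 0 < ‖w‖ := norm_pos_iff.mpr hw0
    refine ⟨‖w‖⁻¹ • w, by simp [norm_smul, hnw.ne'], ?_⟩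
    dsimp only
    rw [hN.smul_eq, abs_of_pos (inv_pos.mpr hnw), (hw : N w = d), smul_smul]
    field_simp
    exact one_smul ℝ w
  · rintro ⟨z, hz, rfl⟩
    have hNz : 0 < N z := hN.pos_of_ne_zero (ne_zero_of_mem_unit_sphere ⟨z, hz⟩)
    show N _ = d
    rw [hN.smul_eq, abs_of_pos (div_pos hd hNz)]
    field_simp

lemma continuousOn_rescale (hN : IsNorm N) (d : ℝ) :
    ContinuousOn (fun z => (d / N z) • z) (Metric.sphere (0 : ℝ × ℝ) 1) := by
  refine (continuousOn_const.div hN.continuous.continuousOn fun z hz => ?_).smul continuousOn_id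
  exact (hN.pos_of_ne_zero (ne_zero_of_mem_unit_sphere ⟨z, hz⟩)).ne'

lemma isCompact_sphere (hN : IsNorm N) {d : ℝ} (hd : 0 < d) : IsCompact {z | N z = d} := by
  rw [hN.sphere_eq_image hd]
  exact (_root_.isCompact_sphere 0 1).image_of_continuousOn (hN.continuousOn_rescale d)

lemma isConnected_sphere (hN : IsNorm N) {d : ℝ} (hd : 0 < d) : IsConnected {z | N z = d} := by
  have hrank : 1 < Module.rank ℝ (ℝ × ℝ) := by
    rw [rank_prod', Module.rank_self ℝ]
    norm_num
  rw [hN.sphere_eq_image hd]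
  exact (_root_.isConnected_sphere hrank 0 zero_le_one).image _ (hN.continuousOn_rescale d)

end IsNorm

def commonNeighbors (N : ℝ × ℝ → ℝ) (d : ℝ) (a b : ℝ × ℝ) : Set (ℝ × ℝ) :=
  {x | N (a - x) = d ∧ N (b - x) = d}

variable {N : ℝ × ℝ → ℝ} {d : ℝ}

lemma commonNeighbors_smul (hN : IsNorm N) {c : ℝ} (hc : 0 < c) (r : ℝ) (a b : ℝ × ℝ) :
    commonNeighbors N (c * r) (c • a) (c • b) = c • commonNeighbors N r a b := by
  have scale : ∀ p x : ℝ × ℝ, N (c • p - x) = c * N (p - c⁻¹ • x) := fun p x => by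
    rw [show c • p - x = c • (p - c⁻¹ • x) by rw [smul_sub, smul_inv_smul₀ hc.ne'],
      hN.smul_eq, abs_of_pos hc]
  ext x
  rw [mem_smul_set_iff_inv_smul_mem₀ hc.ne']
  simp only [commonNeighbors, mem_ofPred_eq, scale, mul_right_inj' hc.ne']

lemma reflect_mem_commonNeighbors (hN : IsNorm N) {a b x : ℝ × ℝ}
    (hx : x ∈ commonNeighbors N d a b) : a + b - x ∈ commonNeighbors N d a b := by
  obtain ⟨hax, hbx⟩ := hx
  constructor
  · rw [show a - (a + b - x) = -(b - x) by abel, hN.map_neg, hbx]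
  · rw [show b - (a + b - x) = -(a - x) by abel, hN.map_neg, hax]

lemma reflect_ne_self (hN : IsNorm N) (hd : 0 < d) {a b x : ℝ × ℝ} (hab : N (a - b) = d)
    (hx : x ∈ commonNeighbors N d a b) : a + b - x ≠ x := by
  intro h
  have : a - b = (2 : ℝ) • (x - b) := by linear_combination (norm := module) h
  rw [this, hN.smul_eq, abs_two, hN.map_sub_rev, hx.2] at hab
  linarith

namespace IsURTC

variable (hU : IsURTC N) (hN : IsNorm N) (hd : 0 < d)
include hU hN hd

lemma encard_commonNeighbors {a b : ℝ × ℝ} (hab : N (a - b) = d) :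
    (commonNeighbors N d a b).encard = 2 := by
  have hab' : N (d⁻¹ • a - d⁻¹ • b) = 1 := by
    rw [← smul_sub, hN.smul_eq, abs_of_pos (inv_pos.mpr hd), hab, inv_mul_cancel₀ hd.ne']
  have := commonNeighbors_smul hN hd 1 (d⁻¹ • a) (d⁻¹ • b)
  rw [mul_one, smul_inv_smul₀ hd.ne', smul_inv_smul₀ hd.ne'] at this
  rw [this, ← image_smul, (smul_right_injective _ hd.ne').injOn.encard_image]
  exact hU _ _ hab'

lemma commonNeighbors_nonempty {a b : ℝ × ℝ} (hab : N (a - b) = d) :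
    (commonNeighbors N d a b).Nonempty :=
  nonempty_of_encard_ne_zero (by simp [hU.encard_commonNeighbors hN hd hab])

lemma eq_or_eq_reflect_of_mem_commonNeighbors {a b x y : ℝ × ℝ} (hab : N (a - b) = d)
    (hx : x ∈ commonNeighbors N d a b) (hy : y ∈ commonNeighbors N d a b) :
    y = x ∨ y = a + b - x := by
  obtain ⟨u, w, -, huw⟩ := encard_eq_two.mp (hU.encard_commonNeighbors hN hd hab)
  have hx' := reflect_mem_commonNeighbors hN hx
  have hne := reflect_ne_self hN hd hab hx
  rw [huw] at hx hy hx'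
  simp only [mem_insert_iff, mem_singleton_iff] at hx hy hx'
  rcases hx with rfl | rfl <;> rcases hy with rfl | rfl <;> rcases hx' with h | h <;> tauto

lemma dist_ne_of_mem_commonNeighbors {a b x y : ℝ × ℝ} (hab : N (a - b) = d)
    (hx : x ∈ commonNeighbors N d a b) (hy : y ∈ commonNeighbors N d a b) :
    N (y - x) ≠ d := by
  intro hxy
  rcases hU.eq_or_eq_reflect_of_mem_commonNeighbors hN hd hab hx hy with rfl | rfl
  · rw [sub_self, hN.map_zero] at hxy
    exact hd.ne hxy
  · have hb : b ∈ commonNeighbors N d a x := ⟨hab, by rw [hN.map_sub_rev, hx.2]⟩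
    have hy' : a + b - x ∈ commonNeighbors N d a x := ⟨hy.1, by rw [hN.map_sub_rev, hxy]⟩
    rcases hU.eq_or_eq_reflect_of_mem_commonNeighbors hN hd hx.1 hb hy' with h | h
    · have : a - x = 0 := by linear_combination (norm := module) h
      exact hd.ne' (by rw [← hx.1, this, hN.map_zero])
    · have : b - x = 0 := by linear_combination (norm := module) (2⁻¹ : ℝ) • h
      exact hd.ne' (by rw [← hx.2, this, hN.map_zero])

end IsURTC

lemma IsCompact.exists_eq_zero_of_fiberwise_eq {X Y : Type*} [TopologicalSpace X]
    [TopologicalSpace Y] [T2Space Y] {K : Set X} (hK : IsCompact K) {f : X → Y}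
    (hf : Continuous f) (hfK : IsPreconnected (f '' K)) {g : X → ℝ} (hg : Continuous g)
    (hgf : ∀ x ∈ K, ∀ y ∈ K, f x = f y → g x = g y) {a b : X} (ha : a ∈ K) (hb : b ∈ K)
    (hga : g a ≤ 0) (hgb : 0 ≤ g b) : ∃ x ∈ K, g x = 0 := by
  have hclosed : ∀ s : Set ℝ, IsClosed s → IsClosed (f '' (K ∩ g ⁻¹' s)) := fun s hs =>
    ((hK.inter_right (hs.preimage hg)).image hf).isClosed
  obtain ⟨-, -, ⟨x, ⟨hxK, hx⟩, rfl⟩, ⟨y, ⟨hyK, hy⟩, hyx⟩⟩ :=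
    isPreconnected_closed_iff.mp hfK _ _ (hclosed _ isClosed_Iic) (hclosed _ isClosed_Ici)
      (by rintro _ ⟨x, hx, rfl⟩
          rcases le_total (g x) 0 with h | h
          exacts [Or.inl ⟨x, ⟨hx, h⟩, rfl⟩, Or.inr ⟨x, ⟨hx, h⟩, rfl⟩])
      ⟨f a, mem_image_of_mem f ha, a, ⟨ha, hga⟩, rfl⟩
      ⟨f b, mem_image_of_mem f hb, b, ⟨hb, hgb⟩, rfl⟩
  exact ⟨x, hxK, le_antisymm hx (hgf y hyK x hxK hyx ▸ hy)⟩

def equilateralTriangles (N : ℝ × ℝ → ℝ) (d : ℝ) : Set ((ℝ × ℝ) × (ℝ × ℝ)) :=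
  {q | N q.1 = d ∧ N q.2 = d ∧ N (q.1 - q.2) = d}

lemma snd_mem_commonNeighbors (hN : IsNorm N) {q : (ℝ × ℝ) × (ℝ × ℝ)}
    (hq : q ∈ equilateralTriangles N d) : q.2 ∈ commonNeighbors N d 0 q.1 :=
  ⟨by rw [zero_sub, hN.map_neg, hq.2.1], hq.2.2⟩

lemma flip_mem_equilateralTriangles {q : (ℝ × ℝ) × (ℝ × ℝ)}
    (hq : q ∈ equilateralTriangles N d) : (q.1, q.1 - q.2) ∈ equilateralTriangles N d :=
  ⟨hq.1, hq.2.2, by rw [sub_sub_cancel, hq.2.1]⟩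

lemma neg_mem_equilateralTriangles (hN : IsNorm N) {q : (ℝ × ℝ) × (ℝ × ℝ)}
    (hq : q ∈ equilateralTriangles N d) : -q ∈ equilateralTriangles N d :=
  ⟨by rw [Prod.fst_neg, hN.map_neg, hq.1], by rw [Prod.snd_neg, hN.map_neg, hq.2.1],
    by rw [Prod.fst_neg, Prod.snd_neg, neg_sub_neg, hN.map_sub_rev, hq.2.2]⟩

lemma isCompact_equilateralTriangles (hN : IsNorm N) (hd : 0 < d) :
    IsCompact (equilateralTriangles N d) := by
  have hc := hN.continuous
  refine ((hN.isCompact_sphere hd).prod (hN.isCompact_sphere hd)).of_isClosed_subset ?_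
    fun q hq => ⟨hq.1, hq.2.1⟩
  exact (isClosed_eq (by fun_prop) continuous_const).inter
    ((isClosed_eq (by fun_prop) continuous_const).inter
      (isClosed_eq (by fun_prop) continuous_const))

namespace IsURTC

variable (hU : IsURTC N) (hN : IsNorm N) (hd : 0 < d)
include hU hN hd

lemma fst_image_equilateralTriangles :
    Prod.fst '' equilateralTriangles N d = {z | N z = d} := by
  refine Subset.antisymm (image_subset_iff.mpr fun q hq => hq.1) fun z hz => ?_
  have hz' : N (0 - z) = d := by rw [zero_sub, hN.map_neg, hz]
  obtain ⟨y, hy0, hzy⟩ := hU.commonNeighbors_nonempty hN hd hz'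
  exact ⟨(z, y), ⟨hz, by rwa [zero_sub, hN.map_neg] at hy0, hzy⟩, rfl⟩

lemma eq_or_eq_flip_of_fst_eq {q q' : (ℝ × ℝ) × (ℝ × ℝ)} (hq : q ∈ equilateralTriangles N d)
    (hq' : q' ∈ equilateralTriangles N d) (h : q.1 = q'.1) :
    q' = q ∨ q' = (q.1, q.1 - q.2) := by
  have hq'2 := snd_mem_commonNeighbors hN hq'
  rw [← h] at hq'2
  have h0 : N (0 - q.1) = d := by rw [zero_sub, hN.map_neg, hq.1]
  rcases hU.eq_or_eq_reflect_of_mem_commonNeighbors hN hd h0 (snd_mem_commonNeighbors hN hq)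
    hq'2 with h2 | h2
  · exact Or.inl (Prod.ext h.symm h2)
  · exact Or.inr (Prod.ext h.symm (by rw [h2, zero_add]))

lemma exists_mem_equilateralTriangles_dist_add_eq {α β : ℝ × ℝ}
    (hαβ : (α, β) ∈ equilateralTriangles N d) :
    ∃ q ∈ equilateralTriangles N d, N (q.1 + q.2 - (α + β)) = d := by
  set T := equilateralTriangles N d
  let g : (ℝ × ℝ) × (ℝ × ℝ) → ℝ := fun q => N (q.1 + q.2 - (α + β)) - d
  -- `q` and its flip are the only triangles over `q.1`, so this product depends on `q.1` alone
  have hfib : ∀ q ∈ T, ∀ q' ∈ T, q.1 = q'.1 →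
      g q * g (q.1, q.1 - q.2) = g q' * g (q'.1, q'.1 - q'.2) := by
    intro q hq q' hq' h
    rcases hU.eq_or_eq_flip_of_fst_eq hN hd hq hq' h with rfl | rfl
    · rfl
    · simp only [sub_sub_cancel, mul_comm]
  have hN2 : ∀ x : ℝ × ℝ, N ((2 : ℝ) • x) = 2 * N x := fun x => by
    rw [hN.smul_eq, abs_two]
  have hsum : d ≤ N (α + β) := by
    have := hN.sub_le_map_sub ((2 : ℝ) • α) (α - β)
    rw [hN2, hαβ.1, hαβ.2.2, show (2 : ℝ) • α - (α - β) = α + β by module] at this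
    linarith
  have hneg : g (α, β) * g (α, α - β) ≤ 0 := by
    have h1 : g (α, β) = -d := by simp [g, hN.map_zero]
    have h2 := hN.sub_le_map_sub ((2 : ℝ) • β) α
    rw [hN2, hαβ.1, hαβ.2.1, show (2 : ℝ) • β - α = -(α + (α - β) - (α + β)) by module,
      hN.map_neg] at h2
    rw [h1]
    nlinarith
  have hpos : 0 ≤ g (-α, -β) * g (-α, -α - -β) := by
    have h1 : g (-α, -β) = 2 * N (α + β) - d := by
      simp only [g]
      rw [show -α + -β - (α + β) = -((2 : ℝ) • (α + β)) by module, hN.map_neg, hN2]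
    have h2 : g (-α, -α - -β) = 2 * d := by
      simp only [g]
      rw [show -α + (-α - -β) - (α + β) = -((3 : ℝ) • α) by module, hN.map_neg, hN.smul_eq,
        hαβ.1, abs_of_pos three_pos]
      ring
    rw [h1, h2]
    nlinarith
  obtain ⟨q, hqT, hq⟩ := (isCompact_equilateralTriangles hN hd).exists_eq_zero_of_fiberwise_eq
    continuous_fst (by rw [hU.fst_image_equilateralTriangles hN hd]
                       exact (hN.isConnected_sphere hd).isPreconnected)
    (by have := hN.continuous; fun_prop) hfib hαβ (neg_mem_equilateralTriangles hN hαβ) hneg hpos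
  rcases mul_eq_zero.mp hq with h | h
  · exact ⟨q, hqT, sub_eq_zero.mp h⟩
  · exact ⟨_, flip_mem_equilateralTriangles hqT, sub_eq_zero.mp h⟩

variable {φ : ℝ × ℝ → ℝ × ℝ} (hφ : ∀ x y : ℝ × ℝ, N (x - y) = d → N (φ x - φ y) = d)
include hφ

lemma map_ne_map_reflect {a b x : ℝ × ℝ} (hab : N (a - b) = d)
    (hx : x ∈ commonNeighbors N d a b) : φ x ≠ φ (a + b - x) := by
  intro hcol
  have hT : (a - x, b - x) ∈ equilateralTriangles N d :=
    ⟨hx.1, hx.2, by rw [sub_sub_sub_cancel_right, hab]⟩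
  obtain ⟨⟨α, β⟩, ⟨hα, hβ, hαβ⟩, hfar⟩ := hU.exists_mem_equilateralTriangles_dist_add_eq hN hd hT
  have hab' : N (φ (x + α) - φ (x + β)) = d := hφ _ _ (by rw [add_sub_add_left_eq_sub, hαβ])
  have hx' : φ x ∈ commonNeighbors N d (φ (x + α)) (φ (x + β)) :=
    ⟨hφ _ _ (by rwa [add_sub_cancel_left]), hφ _ _ (by rwa [add_sub_cancel_left])⟩
  have hfar' : φ (x + α + β) ∈ commonNeighbors N d (φ (x + α)) (φ (x + β)) :=
    ⟨hφ _ _ (by rw [show x + α - (x + α + β) = -β by abel, hN.map_neg, hβ]),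
      hφ _ _ (by rw [show x + β - (x + α + β) = -α by abel, hN.map_neg, hα])⟩
  refine hU.dist_ne_of_mem_commonNeighbors hN hd hab' hx' hfar' ?_
  rw [hcol]
  exact hφ _ _ (by rwa [show x + α + β - (a + b - x) = α + β - (a - x + (b - x)) by abel])

lemma map_reflect {a b x : ℝ × ℝ} (hab : N (a - b) = d) (hx : x ∈ commonNeighbors N d a b) :
    φ (a + b - x) = φ a + φ b - φ x := by
  have hmem : ∀ y ∈ commonNeighbors N d a b, φ y ∈ commonNeighbors N d (φ a) (φ b) :=
    fun y hy => ⟨hφ _ _ hy.1, hφ _ _ hy.2⟩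
  refine (hU.eq_or_eq_reflect_of_mem_commonNeighbors hN hd (hφ a b hab) (hmem x hx)
    (hmem _ (reflect_mem_commonNeighbors hN hx))).resolve_left ?_
  exact (hU.map_ne_map_reflect hN hd hφ hab hx).symm

end IsURTC

/-- For a URTC-norm, a map preserving distance `d` preserves the reflection
`b₀ ↦ 2 b₂ - b₀` for any `b₀, b₂` at distance `d`. -/
theorem preserves_point_reflection (N : ℝ × ℝ → ℝ) (hN : IsNorm N) (hU : IsURTC N)
    (d : ℝ) (hd : 0 < d) (φ : ℝ × ℝ → ℝ × ℝ)
    (hφ : ∀ x y : ℝ × ℝ, N (x - y) = d → N (φ x - φ y) = d)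
    (b₀ b₂ : ℝ × ℝ) (h02 : N (b₀ - b₂) = d) :
    φ ((2 : ℝ) • b₂ - b₀) = (2 : ℝ) • φ b₂ - φ b₀ := by
  obtain ⟨p, hp₀, hp₂⟩ := hU.commonNeighbors_nonempty hN hd h02
  have hb₀ : b₀ ∈ commonNeighbors N d p b₂ :=
    ⟨by rw [hN.map_sub_rev, hp₀], by rw [hN.map_sub_rev, h02]⟩
  have h₁ : φ (p + b₂ - b₀) = φ p + φ b₂ - φ b₀ :=
    hU.map_reflect hN hd hφ (by rw [hN.map_sub_rev, hp₂]) hb₀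
  have hp : p ∈ commonNeighbors N d b₂ (p + b₂ - b₀) :=
    ⟨hp₂, by rw [show p + b₂ - b₀ - p = b₂ - b₀ by abel, hN.map_sub_rev, h02]⟩
  have h₂ := hU.map_reflect hN hd hφ (reflect_mem_commonNeighbors hN hb₀).2 hp
  rw [show b₂ + (p + b₂ - b₀) - p = (2 : ℝ) • b₂ - b₀ by module, h₁] at h₂
  rw [h₂]
  module
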